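/- Let 𝔖 be a bipartite graph on finite parts (𝔘, 𝔚) (primary class 𝔘, secondary class 𝔚) and let 𝒢 be a simple graph on a finite vertex set B disjoint from 𝔘 ∪ 𝔚. Define d : (𝔘 ∪ 𝔚) ∪ B → ℕ by d(u) = deg_𝔖(u) + (|𝔘| − 1) + |B| for u ∈ 𝔘, d(w) = deg_𝔖(w) for w ∈ 𝔚, and d(x) = deg_𝒢(x) + |𝔘| for x ∈ B (this is the degree function of the composition of the split graph obtained from 𝔖 by adding all edges inside 𝔘 with the graph 𝒢). Then the realization graph 𝔾(d) over vertex set (𝔘 ∪ 𝔚) ∪ B is isomorphic to the Cartesian (box) product 𝔾_bip(a, b) □ 𝔾(deg_𝒢), where 𝔾_bip(a, b) is the bipartite realization graph on parts (𝔘, 𝔚) of the degree functions a(u) = deg_𝔖(u), b(w) = deg_𝔖(w), and 𝔾(deg_𝒢) is the realization graph of deg_𝒢 over B. -/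

import Mathlib

open Sym2

attribute [local instance] Classical.propDecidable

/-- `IsSwap G G'` holds when `G'` is obtained from `G` by a single swap. -/
def IsSwap {V : Type*} (G G' : SimpleGraph V) : Prop :=
  ∃ a b c d : V, a ≠ b ∧ a ≠ c ∧ a ≠ d ∧ b ≠ c ∧ b ≠ d ∧ c ≠ d ∧
    G.Adj a c ∧ G.Adj b d ∧ ¬ G.Adj b c ∧ ¬ G.Adj a d ∧
    G'.edgeSet = (G.edgeSet \ {s(a, c), s(b, d)}) ∪ {s(b, c), s(a, d)}

/-- The realization graph `𝔾(d)` of a degree function `d : V → ℕ`. -/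
def realizationGraph {V : Type*} [Fintype V] (d : V → ℕ) :
    SimpleGraph {G : SimpleGraph V // ∀ v, G.degree v = d v} :=
  SimpleGraph.fromRel (fun G G' => IsSwap G.1 G'.1)

/-- A bipartite graph on parts `(α, β)` is modelled by its edge set, a finite set of
pairs in `α × β`.  Degree of a primary vertex `u`. -/
def bipDegU {α β : Type*} [DecidableEq α] (E : Finset (α × β)) (u : α) : ℕ :=
  (E.filter (fun p => p.1 = u)).card

/-- Degree of a secondary vertex `w` in a bipartite graph given by its edge set. -/
def bipDegW {α β : Type*} [DecidableEq β] (E : Finset (α × β)) (w : β) : ℕ :=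
  (E.filter (fun p => p.2 = w)).card

/-- A bipartite swap: `E'` is obtained from `E` by replacing edges `ac, bd` by
`ad, bc`, where `a ≠ b` are primary and `c ≠ d` secondary vertices. -/
def IsBipSwap {α β : Type*} [DecidableEq α] [DecidableEq β]
    (E E' : Finset (α × β)) : Prop :=
  ∃ (a b : α) (c d : β), a ≠ b ∧ c ≠ d ∧
    (a, c) ∈ E ∧ (b, d) ∈ E ∧ (a, d) ∉ E ∧ (b, c) ∉ E ∧
    E' = (E \ {(a, c), (b, d)}) ∪ {(a, d), (b, c)}

/-- The bipartite realization graph `𝔾_bip(a, b)` of degree functions `a : α → ℕ`,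
`b : β → ℕ`: its vertices are the bipartite graphs on parts `(α, β)` with the given
degrees, two of them being adjacent iff they differ by a single bipartite swap. -/
def bipRealizationGraph {α β : Type*} [DecidableEq α] [DecidableEq β]
    (a : α → ℕ) (b : β → ℕ) :
    SimpleGraph {E : Finset (α × β) //
      (∀ u, bipDegU E u = a u) ∧ (∀ w, bipDegW E w = b w)} :=
  SimpleGraph.fromRel (fun E E' => IsBipSwap E.1 E'.1)


section AUX1
open Finset



section Comp

variable {α β γ : Type*}

/-- Adjacency of the composition graph. -/
def compAdj (E : Finset (α × β)) (H : SimpleGraph γ) :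
    (α ⊕ β) ⊕ γ → (α ⊕ β) ⊕ γ → Prop
  | .inl (.inl u), .inl (.inl u') => u ≠ u'
  | .inl (.inl u), .inl (.inr w) => (u, w) ∈ E
  | .inl (.inr w), .inl (.inl u) => (u, w) ∈ E
  | .inl (.inl _), .inr _ => True
  | .inr _, .inl (.inl _) => True
  | .inr x, .inr y => H.Adj x y
  | _, _ => False

def comp (E : Finset (α × β)) (H : SimpleGraph γ) : SimpleGraph ((α ⊕ β) ⊕ γ) where
  Adj := compAdj E H
  symm := by
    constructor
    rintro (⟨u|w⟩|x) (⟨u'|w'⟩|y) h <;>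
      simp only [compAdj] at h ⊢ <;>
      first | exact h | exact h.symm | exact H.symm h
  loopless := by
    constructor
    rintro (⟨u|w⟩|x) h <;> simp only [compAdj] at h <;>
      first | exact h rfl | exact h | exact H.loopless.irrefl x h

@[simp] lemma comp_adj_UU (E : Finset (α × β)) (H : SimpleGraph γ) (u u' : α) :
    (comp E H).Adj (.inl (.inl u)) (.inl (.inl u')) ↔ u ≠ u' := Iff.rfl
@[simp] lemma comp_adj_UW (E : Finset (α × β)) (H : SimpleGraph γ) (u : α) (w : β) :
    (comp E H).Adj (.inl (.inl u)) (.inl (.inr w)) ↔ (u, w) ∈ E := Iff.rfl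
@[simp] lemma comp_adj_WU (E : Finset (α × β)) (H : SimpleGraph γ) (u : α) (w : β) :
    (comp E H).Adj (.inl (.inr w)) (.inl (.inl u)) ↔ (u, w) ∈ E := Iff.rfl
@[simp] lemma comp_adj_UB (E : Finset (α × β)) (H : SimpleGraph γ) (u : α) (x : γ) :
    (comp E H).Adj (.inl (.inl u)) (.inr x) ↔ True := Iff.rfl
@[simp] lemma comp_adj_BU (E : Finset (α × β)) (H : SimpleGraph γ) (u : α) (x : γ) :
    (comp E H).Adj (.inr x) (.inl (.inl u)) ↔ True := Iff.rfl
@[simp] lemma comp_adj_WW (E : Finset (α × β)) (H : SimpleGraph γ) (w w' : β) :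
    (comp E H).Adj (.inl (.inr w)) (.inl (.inr w')) ↔ False := Iff.rfl
@[simp] lemma comp_adj_WB (E : Finset (α × β)) (H : SimpleGraph γ) (w : β) (x : γ) :
    (comp E H).Adj (.inl (.inr w)) (.inr x) ↔ False := Iff.rfl
@[simp] lemma comp_adj_BW (E : Finset (α × β)) (H : SimpleGraph γ) (w : β) (x : γ) :
    (comp E H).Adj (.inr x) (.inl (.inr w)) ↔ False := Iff.rfl
@[simp] lemma comp_adj_BB (E : Finset (α × β)) (H : SimpleGraph γ) (x y : γ) :
    (comp E H).Adj (.inr x) (.inr y) ↔ H.Adj x y := Iff.rfl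

lemma degree_filter {V : Type*} [Fintype V] (G : SimpleGraph V) (v : V) :
    G.degree v = (univ.filter (G.Adj v)).card := by
  classical
  rw [← SimpleGraph.neighborFinset_eq_filter]
  rfl

lemma degree_decomp [Fintype α] [Fintype β] [Fintype γ]
    (G : SimpleGraph ((α ⊕ β) ⊕ γ)) (v : (α ⊕ β) ⊕ γ) :
    G.degree v
      = (univ.filter fun u : α => G.Adj v (Sum.inl (Sum.inl u))).card
      + (univ.filter fun w : β => G.Adj v (Sum.inl (Sum.inr w))).card
      + (univ.filter fun x : γ => G.Adj v (Sum.inr x)).card := by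
  rw [degree_filter, card_filter, Fintype.sum_sum_type, Fintype.sum_sum_type,
    card_filter, card_filter, card_filter]

end Comp
section X
variable {α β : Type*}

lemma card_filter_eq_bipDegU [DecidableEq α] [DecidableEq β] [Fintype β] (E : Finset (α × β)) (u : α) :
    (univ.filter fun w : β => (u, w) ∈ E).card = bipDegU E u := by
  rw [bipDegU]
  apply Finset.card_bij (fun w _ => (u, w))
  · intro w hw; simp only [mem_filter, mem_univ, true_and] at hw; simp [hw]
  · intro w _ w' _ h; exact (Prod.mk.injEq _ _ _ _).mp h |>.2
  · rintro ⟨u', w⟩ hp; simp only [mem_filter] at hp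
    obtain ⟨hmem, rfl⟩ := hp
    exact ⟨w, by simp [hmem], rfl⟩

lemma card_filter_eq_bipDegW [DecidableEq α] [DecidableEq β] [Fintype α] (E : Finset (α × β)) (w : β) :
    (univ.filter fun u : α => (u, w) ∈ E).card = bipDegW E w := by
  rw [bipDegW]
  apply Finset.card_bij (fun u _ => (u, w))
  · intro u hu; simp only [mem_filter, mem_univ, true_and] at hu; simp [hu]
  · intro u _ u' _ h; exact (Prod.mk.injEq _ _ _ _).mp h |>.1
  · rintro ⟨u, w'⟩ hp; simp only [mem_filter] at hp
    obtain ⟨hmem, rfl⟩ := hp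
    exact ⟨u, by simp [hmem], rfl⟩

lemma sum_bipDegU [DecidableEq α] [Fintype α] (E : Finset (α × β)) :
    ∑ u, bipDegU E u = E.card :=
  (Finset.card_eq_sum_card_fiberwise (fun p _ => Finset.mem_univ p.1)).symm

lemma sum_bipDegW [DecidableEq β] [Fintype β] (E : Finset (α × β)) :
    ∑ w, bipDegW E w = E.card :=
  (Finset.card_eq_sum_card_fiberwise (fun p _ => Finset.mem_univ p.2)).symm

variable {γ : Type*} [Fintype α] [Fintype β] [Fintype γ] [DecidableEq α] [DecidableEq β]

lemma comp_degree_U (E : Finset (α × β)) (H : SimpleGraph γ) (u : α) :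
    (comp E H).degree (Sum.inl (Sum.inl u))
      = bipDegU E u + (Fintype.card α - 1) + Fintype.card γ := by
  rw [degree_decomp]
  simp only [comp_adj_UU, comp_adj_UW, comp_adj_UB, filter_true, card_univ]
  rw [card_filter_eq_bipDegU]
  have h : (filter (fun u' : α => u ≠ u') univ) = univ.erase u := by
    ext u'; simp [Finset.mem_erase, ne_comm]
  rw [h, card_erase_of_mem (mem_univ u), card_univ]
  omega

lemma comp_degree_W (E : Finset (α × β)) (H : SimpleGraph γ) (w : β) :
    (comp E H).degree (Sum.inl (Sum.inr w)) = bipDegW E w := by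
  rw [degree_decomp]
  simp only [comp_adj_WU, comp_adj_WW, comp_adj_WB, filter_false, card_empty]
  rw [card_filter_eq_bipDegW]
  omega

lemma comp_degree_B (E : Finset (α × β)) (H : SimpleGraph γ) (x : γ) :
    (comp E H).degree (Sum.inr x) = H.degree x + Fintype.card α := by
  rw [degree_decomp]
  simp only [comp_adj_BU, comp_adj_BW, comp_adj_BB, filter_true, filter_false,
    card_univ, card_empty]
  rw [← degree_filter]
  omega
end X
end AUX1

section AUX2
open Finset

variable {α β γ : Type*}

lemma swap_edge_char {V : Type*} (G G' : SimpleGraph V) (a b c d : V) :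
    G'.edgeSet = (G.edgeSet \ {s(a,c), s(b,d)}) ∪ {s(b,c), s(a,d)} ↔
    ∀ x y : V, G'.Adj x y ↔
      ((G.Adj x y ∧ s(x,y) ≠ s(a,c) ∧ s(x,y) ≠ s(b,d)) ∨
        (s(x,y) = s(b,c) ∨ s(x,y) = s(a,d))) := by
  rw [Set.ext_iff]
  constructor
  · intro h x y
    have := h s(x,y)
    simp only [SimpleGraph.mem_edgeSet, Set.mem_union, Set.mem_diff,
      Set.mem_insert_iff, Set.mem_singleton_iff, not_or] at this
    tauto
  · intro h e
    induction e using Sym2.ind with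
    | _ x y =>
      have := h x y
      simp only [SimpleGraph.mem_edgeSet, Set.mem_union, Set.mem_diff,
        Set.mem_insert_iff, Set.mem_singleton_iff, not_or]
      tauto

lemma isSwap_symm {V : Type*} {G G' : SimpleGraph V} (h : IsSwap G G') : IsSwap G' G := by
  obtain ⟨a, b, c, d, hab, hac, had, hbc, hbd, hcd, h1, h2, h3, h4, hE⟩ := h
  have e13 : s(a,c) ≠ s(b,c) := by
    simp [Sym2.eq_iff, hab, hac, had, hbc, hbd, hcd, Ne.symm hab, Ne.symm hac,
      Ne.symm had, Ne.symm hbc, Ne.symm hbd, Ne.symm hcd]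
  have e14 : s(a,c) ≠ s(a,d) := by
    simp [Sym2.eq_iff, hab, hac, had, hbc, hbd, hcd, Ne.symm hab, Ne.symm hac,
      Ne.symm had, Ne.symm hbc, Ne.symm hbd, Ne.symm hcd]
  have e23 : s(b,d) ≠ s(b,c) := by
    simp [Sym2.eq_iff, hab, hac, had, hbc, hbd, hcd, Ne.symm hab, Ne.symm hac,
      Ne.symm had, Ne.symm hbc, Ne.symm hbd, Ne.symm hcd]
  have e24 : s(b,d) ≠ s(a,d) := by
    simp [Sym2.eq_iff, hab, hac, had, hbc, hbd, hcd, Ne.symm hab, Ne.symm hac,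
      Ne.symm had, Ne.symm hbc, Ne.symm hbd, Ne.symm hcd]
  have hchar := (swap_edge_char G G' a b c d).mp hE
  have adj_iff : ∀ {x y u v : V}, s(x,y) = s(u,v) → (G.Adj x y ↔ G.Adj u v) := by
    intro x y u v h
    rw [← SimpleGraph.mem_edgeSet, h, SimpleGraph.mem_edgeSet]
  have m1 : ∀ {x y : V}, s(x,y) = s(a,c) → G.Adj x y := fun k => (adj_iff k).mpr h1
  have m2 : ∀ {x y : V}, s(x,y) = s(b,d) → G.Adj x y := fun k => (adj_iff k).mpr h2
  have m3 : ∀ {x y : V}, s(x,y) = s(b,c) → ¬ G.Adj x y := fun k hxy => h3 ((adj_iff k).mp hxy)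
  have m4 : ∀ {x y : V}, s(x,y) = s(a,d) → ¬ G.Adj x y := fun k hxy => h4 ((adj_iff k).mp hxy)
  refine ⟨b, a, c, d, hab.symm, hbc, hbd, hac, had, hcd,
    (hchar b c).mpr (Or.inr (Or.inl rfl)), (hchar a d).mpr (Or.inr (Or.inr rfl)), ?_, ?_, ?_⟩
  · rw [hchar a c]
    rintro (⟨_, hk, _⟩ | hk | hk)
    · exact hk rfl
    · exact e13 hk
    · exact e14 hk
  · rw [hchar b d]
    rintro (⟨_, _, hk⟩ | hk | hk)
    · exact hk rfl
    · exact e23 hk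
    · exact e24 hk
  · rw [swap_edge_char]
    intro x y
    rw [hchar x y]
    constructor
    · intro hxy
      by_cases k3 : s(x,y) = s(b,c)
      · exact absurd hxy (m3 k3)
      by_cases k4 : s(x,y) = s(a,d)
      · exact absurd hxy (m4 k4)
      by_cases k1 : s(x,y) = s(a,c)
      · exact Or.inr (Or.inl k1)
      by_cases k2 : s(x,y) = s(b,d)
      · exact Or.inr (Or.inr k2)
      exact Or.inl ⟨Or.inl ⟨hxy, k1, k2⟩, k3, k4⟩
    · rintro (⟨(⟨hxy, _, _⟩ | hk | hk), k3, k4⟩ | k1 | k2)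
      · exact hxy
      · exact (k3 hk).elim
      · exact (k4 hk).elim
      · exact m1 k1
      · exact m2 k2

lemma isSwap_ne {V : Type*} {G G' : SimpleGraph V} (h : IsSwap G G') : G ≠ G' := by
  obtain ⟨a, b, c, d, hab, hac, had, hbc, hbd, hcd, h1, h2, h3, h4, hE⟩ := h
  intro he
  have : G'.Adj a d := by
    rw [← SimpleGraph.mem_edgeSet, hE]; simp
  rw [← he] at this
  exact h4 this

lemma isBipSwap_symm {α β : Type*} [DecidableEq α] [DecidableEq β]
    {E E' : Finset (α × β)} (h : IsBipSwap E E') : IsBipSwap E' E := by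
  obtain ⟨a, b, c, d, hab, hcd, h1, h2, h3, h4, hE⟩ := h
  refine ⟨a, b, d, c, hab, hcd.symm, ?_, ?_, ?_, ?_, ?_⟩
  · rw [hE]; simp
  · rw [hE]; simp
  · rw [hE]
    simp [Prod.mk.injEq, hab, hcd, Ne.symm hab, Ne.symm hcd]
  · rw [hE]
    simp [Prod.mk.injEq, hab, hcd, Ne.symm hab, Ne.symm hcd]
  · rw [hE]
    ext ⟨u, w⟩
    by_cases k1 : (u, w) = (a, c) <;> by_cases k2 : (u, w) = (b, d) <;>
      by_cases k3 : (u, w) = (a, d) <;> by_cases k4 : (u, w) = (b, c) <;>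
      simp_all [Prod.mk.injEq] <;> tauto

lemma isBipSwap_ne {α β : Type*} [DecidableEq α] [DecidableEq β]
    {E E' : Finset (α × β)} (h : IsBipSwap E E') : E ≠ E' := by
  obtain ⟨a, b, c, d, hab, hcd, h1, h2, h3, h4, hE⟩ := h
  intro he
  have : (a, d) ∈ E' := by rw [hE]; simp
  rw [← he] at this
  exact h3 this

set_option maxHeartbeats 1000000 in
lemma comp_inj {E E' : Finset (α × β)} {H H' : SimpleGraph γ}
    (h : comp E H = comp E' H') : E = E' ∧ H = H' := by
  constructor
  · ext ⟨u, w⟩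
    have h2 : (comp E H).Adj (Sum.inl (Sum.inl u)) (Sum.inl (Sum.inr w)) ↔
        (comp E' H').Adj (Sum.inl (Sum.inl u)) (Sum.inl (Sum.inr w)) := by rw [h]
    simpa using h2
  · ext x y
    have h2 : (comp E H).Adj (Sum.inr x) (Sum.inr y) ↔
        (comp E' H').Adj (Sum.inr x) (Sum.inr y) := by rw [h]
    simpa using h2

set_option maxHeartbeats 2000000 in
lemma isSwap_comp_of_bip [DecidableEq α] [DecidableEq β]
    {E E' : Finset (α × β)} (H : SimpleGraph γ) (h : IsBipSwap E E') :
    IsSwap (comp E H) (comp E' H) := by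
  obtain ⟨a, b, c, d, hab, hcd, h1, h2, h3, h4, hE⟩ := h
  refine ⟨Sum.inl (Sum.inl a), Sum.inl (Sum.inl b), Sum.inl (Sum.inr c), Sum.inl (Sum.inr d),
    by simp [hab], by simp, by simp, by simp, by simp, by simp [hcd],
    by simpa using h1, by simpa using h2, by simpa using h4, by simpa using h3, ?_⟩
  rw [swap_edge_char]
  have hmem : ∀ u : α, ∀ w : β, ((u, w) ∈ E' ↔
      ((u, w) ∈ E ∧ ¬(u = a ∧ w = c) ∧ ¬(u = b ∧ w = d)) ∨
        ((u = a ∧ w = d) ∨ (u = b ∧ w = c))) := by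
    intro u w
    rw [hE]
    simp only [mem_union, mem_sdiff, mem_insert, mem_singleton, Prod.mk.injEq, not_or]
    try tauto
  rintro ((u|w)|x) ((u'|w')|y) <;>
    simp only [comp_adj_UU, comp_adj_UW, comp_adj_WU, comp_adj_UB, comp_adj_BU,
      comp_adj_WW, comp_adj_WB, comp_adj_BW, comp_adj_BB, Sym2.eq_iff, hmem] <;>
    simp [Sum.inl.injEq, Sum.inr.injEq, not_or] <;>
    try tauto

set_option maxHeartbeats 2000000 in
lemma isSwap_comp_of_swap [DecidableEq α] [DecidableEq β]
    (E : Finset (α × β)) {H H' : SimpleGraph γ} (h : IsSwap H H') :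
    IsSwap (comp E H) (comp E H') := by
  obtain ⟨a, b, c, d, hab, hac, had, hbc, hbd, hcd, h1, h2, h3, h4, hE⟩ := h
  rw [swap_edge_char] at hE
  refine ⟨Sum.inr a, Sum.inr b, Sum.inr c, Sum.inr d,
    by simp [hab], by simp [hac], by simp [had], by simp [hbc], by simp [hbd], by simp [hcd],
    by simpa using h1, by simpa using h2, by simpa using h3, by simpa using h4, ?_⟩
  rw [swap_edge_char]
  rintro ((u|w)|x) ((u'|w')|y) <;>
    simp only [comp_adj_UU, comp_adj_UW, comp_adj_WU, comp_adj_UB, comp_adj_BU,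
      comp_adj_WW, comp_adj_WB, comp_adj_BW, comp_adj_BB, hE, Sym2.eq_iff] <;>
    simp [Sum.inl.injEq, Sum.inr.injEq, not_or] <;>
    try tauto

end AUX2

section AUX3
open Finset

variable {α β γ : Type*} [DecidableEq α] [DecidableEq β]

set_option maxHeartbeats 4000000 in
lemma isSwap_comp_forward {E E' : Finset (α × β)} {H H' : SimpleGraph γ}
    (h : IsSwap (comp E H) (comp E' H')) :
    (IsBipSwap E E' ∧ H' = H) ∨ (E' = E ∧ IsSwap H H') := by
  obtain ⟨a, b, c, d, hab, hac, had, hbc, hbd, hcd, h1, h2, h3, h4, hE⟩ := h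
  rw [swap_edge_char] at hE
  have hp3 : (comp E' H').Adj b c := (hE b c).mpr (Or.inr (Or.inl rfl))
  have hp4 : (comp E' H').Adj a d := (hE a d).mpr (Or.inr (Or.inr rfl))
  have hn1 : ¬ (comp E' H').Adj a c := by
    rw [hE a c]
    simp [Sym2.eq_iff, hab, hac, had, hbc, hbd, hcd, Ne.symm hab, Ne.symm hac,
      Ne.symm had, Ne.symm hbc, Ne.symm hbd, Ne.symm hcd]
  have hn2 : ¬ (comp E' H').Adj b d := by
    rw [hE b d]
    simp [Sym2.eq_iff, hab, hac, had, hbc, hbd, hcd, Ne.symm hab, Ne.symm hac,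
      Ne.symm had, Ne.symm hbc, Ne.symm hbd, Ne.symm hcd]
  rcases a with (ua|wa)|xa
  · rcases c with (uc|wc)|xc
    · exact absurd (by simpa using hn1) (by simpa using h1)
    · -- main bipartite case, orientation 1
      rcases d with (ud|wd)|xd
      · exact absurd (by simpa using h4) (by simpa using hp4)
      · rcases b with (ub|wb)|xb
        · -- MAIN1
          refine Or.inl ⟨⟨ua, ub, wc, wd, by simpa using hab, by simpa using hcd,
            by simpa using h1, by simpa using h2, by simpa using h4, by simpa using h3, ?_⟩, ?_⟩
          · ext ⟨u, w⟩
            have hx := hE (Sum.inl (Sum.inl u)) (Sum.inl (Sum.inr w))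
            simp only [comp_adj_UW, Sym2.eq_iff, Sum.inl.injEq, Sum.inr.injEq,
              reduceCtorEq, and_false, false_and, false_or, or_false, ne_eq, not_or] at hx
            simp only [mem_union, mem_sdiff, mem_insert, mem_singleton, Prod.mk.injEq, not_or]
            tauto
          · ext x y
            have hx := hE (Sum.inr x) (Sum.inr y)
            simp only [comp_adj_BB, Sym2.eq_iff, Sum.inl.injEq, Sum.inr.injEq,
              reduceCtorEq, and_false, false_and, false_or, or_false, ne_eq,
              not_false_eq_true, and_true, true_and, not_or] at hx
            tauto
        · exact absurd hp3 (by simp)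
        · exact absurd hp3 (by simp)
      · exact (h4 (by simp)).elim
    · exact (hn1 (by simp)).elim
  · rcases c with (uc|wc)|xc
    · -- main bipartite case, orientation 2
      rcases d with (ud|wd)|xd
      · rcases b with (ub|wb)|xb
        · exact absurd (by simpa using h3) (by simpa using hp3)
        · -- MAIN2
          refine Or.inl ⟨⟨uc, ud, wa, wb, by simpa using hcd, by simpa using hab,
            by simpa using h1, by simpa using h2, by simpa using h3, by simpa using h4, ?_⟩, ?_⟩
          · ext ⟨u, w⟩
            have hx := hE (Sum.inl (Sum.inl u)) (Sum.inl (Sum.inr w))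
            simp only [comp_adj_UW, Sym2.eq_iff, Sum.inl.injEq, Sum.inr.injEq,
              reduceCtorEq, and_false, false_and, false_or, or_false, ne_eq, not_or] at hx
            simp only [mem_union, mem_sdiff, mem_insert, mem_singleton, Prod.mk.injEq, not_or]
            tauto
          · ext x y
            have hx := hE (Sum.inr x) (Sum.inr y)
            simp only [comp_adj_BB, Sym2.eq_iff, Sum.inl.injEq, Sum.inr.injEq,
              reduceCtorEq, and_false, false_and, false_or, or_false, ne_eq,
              not_false_eq_true, and_true, true_and, not_or] at hx
            tauto
        · exact (h3 (by simp)).elim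
      · exact absurd hp4 (by simp)
      · exact absurd hp4 (by simp)
    · exact absurd h1 (by simp)
    · exact absurd h1 (by simp)
  · rcases c with (uc|wc)|xc
    · exact (hn1 (by simp)).elim
    · exact absurd h1 (by simp)
    · -- gamma case
      rcases d with (ud|wd)|xd
      · exact (h4 (by simp)).elim
      · exact absurd hp4 (by simp)
      · rcases b with (ub|wb)|xb
        · exact (hn2 (by simp)).elim
        · exact absurd h2 (by simp)
        · -- MAIN3
          refine Or.inr ⟨?_, ⟨xa, xb, xc, xd, by simpa using hab, by simpa using hac,
            by simpa using had, by simpa using hbc, by simpa using hbd, by simpa using hcd,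
            by simpa using h1, by simpa using h2, by simpa using h3, by simpa using h4, ?_⟩⟩
          · ext ⟨u, w⟩
            have hx := hE (Sum.inl (Sum.inl u)) (Sum.inl (Sum.inr w))
            simp only [comp_adj_UW, Sym2.eq_iff, Sum.inl.injEq, Sum.inr.injEq,
              reduceCtorEq, and_false, false_and, false_or, or_false, ne_eq,
              not_false_eq_true, and_true, true_and, not_or] at hx
            exact hx
          · rw [swap_edge_char]
            intro x y
            have hx := hE (Sum.inr x) (Sum.inr y)
            simp only [comp_adj_BB, Sym2.eq_iff, Sum.inl.injEq, Sum.inr.injEq,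
              reduceCtorEq, and_false, false_and, false_or, or_false, ne_eq, not_or] at hx
            simp only [Sym2.eq_iff, ne_eq, not_or]
            tauto

end AUX3

section AUX4
open Finset

variable {α β γ : Type*} [Fintype α] [Fintype β] [Fintype γ] [DecidableEq α] [DecidableEq β]

noncomputable def EOf (G : SimpleGraph ((α ⊕ β) ⊕ γ)) : Finset (α × β) :=
  univ.filter fun p => G.Adj (Sum.inl (Sum.inl p.1)) (Sum.inl (Sum.inr p.2))

@[simp] lemma mem_EOf {G : SimpleGraph ((α ⊕ β) ⊕ γ)} {u : α} {w : β} :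
    (u, w) ∈ EOf G ↔ G.Adj (Sum.inl (Sum.inl u)) (Sum.inl (Sum.inr w)) := by
  simp [EOf]

lemma EOf_comp (E : Finset (α × β)) (H : SimpleGraph γ) : EOf (comp E H) = E := by
  ext ⟨u, w⟩; simp

lemma comap_comp (E : Finset (α × β)) (H : SimpleGraph γ) :
    SimpleGraph.comap Sum.inr (comp E H) = H := by
  ext x y; simp [SimpleGraph.comap_adj]

set_option maxHeartbeats 1000000 in
lemma structure_lemma (𝔖 : Finset (α × β)) (d : (α ⊕ β) ⊕ γ → ℕ)
    (hdU : ∀ u : α, d (Sum.inl (Sum.inl u)) =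
      bipDegU 𝔖 u + (Fintype.card α - 1) + Fintype.card γ)
    (hdW : ∀ w : β, d (Sum.inl (Sum.inr w)) = bipDegW 𝔖 w)
    (G : SimpleGraph ((α ⊕ β) ⊕ γ)) (hG : ∀ v, G.degree v = d v) :
    G = comp (EOf G) (SimpleGraph.comap Sum.inr G) := by
  classical
  have hdec : ∀ v, (univ.filter fun u' : α => G.Adj v (Sum.inl (Sum.inl u'))).card
      + (univ.filter fun w' : β => G.Adj v (Sum.inl (Sum.inr w'))).card
      + (univ.filter fun x' : γ => G.Adj v (Sum.inr x')).card = d v := fun v => by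
    rw [← degree_decomp, hG]
  have hAsub : ∀ u : α,
      (univ.filter fun u' : α => G.Adj (Sum.inl (Sum.inl u)) (Sum.inl (Sum.inl u')))
        ⊆ univ.erase u := by
    intro u u' hu'
    rw [mem_filter] at hu'
    refine mem_erase.mpr ⟨?_, mem_univ _⟩
    rintro rfl
    exact G.loopless.irrefl _ hu'.2
  have hAle : ∀ u : α,
      (univ.filter fun u' : α => G.Adj (Sum.inl (Sum.inl u)) (Sum.inl (Sum.inl u'))).card
        ≤ Fintype.card α - 1 := by
    intro u
    calc (univ.filter fun u' : α =>
          G.Adj (Sum.inl (Sum.inl u)) (Sum.inl (Sum.inl u'))).card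
        ≤ (univ.erase u).card := card_le_card (hAsub u)
      _ = Fintype.card α - 1 := by rw [card_erase_of_mem (mem_univ u), card_univ]
  have hCle : ∀ u : α,
      (univ.filter fun x' : γ => G.Adj (Sum.inl (Sum.inl u)) (Sum.inr x')).card
        ≤ Fintype.card γ := by
    intro u
    calc (univ.filter fun x' : γ => G.Adj (Sum.inl (Sum.inl u)) (Sum.inr x')).card
        ≤ (univ : Finset γ).card := card_filter_le _ _
      _ = Fintype.card γ := card_univ
  have hWle : ∀ w : β,
      (univ.filter fun u' : α => G.Adj (Sum.inl (Sum.inr w)) (Sum.inl (Sum.inl u'))).card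
        ≤ bipDegW 𝔖 w := by
    intro w
    have h0 := hdec (Sum.inl (Sum.inr w))
    rw [hdW] at h0
    omega
  have hBsum : (∑ u : α, (univ.filter fun w' : β =>
        G.Adj (Sum.inl (Sum.inl u)) (Sum.inl (Sum.inr w'))).card)
      = ∑ w : β, (univ.filter fun u' : α =>
        G.Adj (Sum.inl (Sum.inr w)) (Sum.inl (Sum.inl u'))).card := by
    simp only [card_filter]
    rw [Finset.sum_comm]
    refine Finset.sum_congr rfl fun w _ => Finset.sum_congr rfl fun u _ => ?_
    rw [SimpleGraph.adj_comm]
  have hsumU : (∑ u : α, ((univ.filter fun u' : α =>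
          G.Adj (Sum.inl (Sum.inl u)) (Sum.inl (Sum.inl u'))).card
        + (univ.filter fun w' : β =>
          G.Adj (Sum.inl (Sum.inl u)) (Sum.inl (Sum.inr w'))).card
        + (univ.filter fun x' : γ =>
          G.Adj (Sum.inl (Sum.inl u)) (Sum.inr x')).card))
      = 𝔖.card + Fintype.card α * (Fintype.card α - 1)
          + Fintype.card α * Fintype.card γ := by
    calc (∑ u : α, ((univ.filter fun u' : α =>
            G.Adj (Sum.inl (Sum.inl u)) (Sum.inl (Sum.inl u'))).card
          + (univ.filter fun w' : β =>
            G.Adj (Sum.inl (Sum.inl u)) (Sum.inl (Sum.inr w'))).card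
          + (univ.filter fun x' : γ =>
            G.Adj (Sum.inl (Sum.inl u)) (Sum.inr x')).card))
        = ∑ u : α, d (Sum.inl (Sum.inl u)) :=
          Finset.sum_congr rfl fun u _ => hdec (Sum.inl (Sum.inl u))
      _ = ∑ u : α, (bipDegU 𝔖 u + (Fintype.card α - 1) + Fintype.card γ) := by
          exact Finset.sum_congr rfl fun u _ => hdU u
      _ = 𝔖.card + Fintype.card α * (Fintype.card α - 1)
          + Fintype.card α * Fintype.card γ := by
          rw [Finset.sum_add_distrib, Finset.sum_add_distrib, sum_bipDegU,
            Finset.sum_const, Finset.sum_const, card_univ, smul_eq_mul, smul_eq_mul]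
  have hAtot : (∑ u : α, (univ.filter fun u' : α =>
        G.Adj (Sum.inl (Sum.inl u)) (Sum.inl (Sum.inl u'))).card)
      ≤ Fintype.card α * (Fintype.card α - 1) := by
    calc _ ≤ ∑ _u : α, (Fintype.card α - 1) := Finset.sum_le_sum fun u _ => hAle u
      _ = Fintype.card α * (Fintype.card α - 1) := by
          rw [Finset.sum_const, card_univ, smul_eq_mul]
  have hCtot : (∑ u : α, (univ.filter fun x' : γ =>
        G.Adj (Sum.inl (Sum.inl u)) (Sum.inr x')).card)
      ≤ Fintype.card α * Fintype.card γ := by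
    calc _ ≤ ∑ _u : α, Fintype.card γ := Finset.sum_le_sum fun u _ => hCle u
      _ = Fintype.card α * Fintype.card γ := by
          rw [Finset.sum_const, card_univ, smul_eq_mul]
  have hBtot : (∑ u : α, (univ.filter fun w' : β =>
        G.Adj (Sum.inl (Sum.inl u)) (Sum.inl (Sum.inr w'))).card) ≤ 𝔖.card := by
    rw [hBsum]
    calc _ ≤ ∑ w : β, bipDegW 𝔖 w := Finset.sum_le_sum fun w _ => hWle w
      _ = 𝔖.card := sum_bipDegW 𝔖
  rw [Finset.sum_add_distrib, Finset.sum_add_distrib] at hsumU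
  have hAeq' : (∑ u : α, (univ.filter fun u' : α =>
      G.Adj (Sum.inl (Sum.inl u)) (Sum.inl (Sum.inl u'))).card)
      = Fintype.card α * (Fintype.card α - 1) := by omega
  have hBeq' : (∑ u : α, (univ.filter fun w' : β =>
      G.Adj (Sum.inl (Sum.inl u)) (Sum.inl (Sum.inr w'))).card) = 𝔖.card := by omega
  have hCeq' : (∑ u : α, (univ.filter fun x' : γ =>
      G.Adj (Sum.inl (Sum.inl u)) (Sum.inr x')).card)
      = Fintype.card α * Fintype.card γ := by omega
  have hAeq : ∀ u ∈ (univ : Finset α),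
      (univ.filter fun u' : α =>
        G.Adj (Sum.inl (Sum.inl u)) (Sum.inl (Sum.inl u'))).card
      = Fintype.card α - 1 := by
    refine (Finset.sum_eq_sum_iff_of_le (fun u _ => hAle u)).mp ?_
    rw [Finset.sum_const, card_univ, smul_eq_mul]
    exact hAeq'
  have hCeq : ∀ u ∈ (univ : Finset α),
      (univ.filter fun x' : γ =>
        G.Adj (Sum.inl (Sum.inl u)) (Sum.inr x')).card = Fintype.card γ := by
    refine (Finset.sum_eq_sum_iff_of_le (fun u _ => hCle u)).mp ?_
    rw [Finset.sum_const, card_univ, smul_eq_mul]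
    exact hCeq'
  have hWeq : ∀ w ∈ (univ : Finset β),
      (univ.filter fun u' : α =>
        G.Adj (Sum.inl (Sum.inr w)) (Sum.inl (Sum.inl u'))).card = bipDegW 𝔖 w := by
    refine (Finset.sum_eq_sum_iff_of_le (fun w _ => hWle w)).mp ?_
    rw [← hBsum, hBeq']
    exact (sum_bipDegW 𝔖).symm
  have fact1 : ∀ u u' : α, u ≠ u' →
      G.Adj (Sum.inl (Sum.inl u)) (Sum.inl (Sum.inl u')) := by
    intro u u' hne
    have heq : (univ.filter fun u' : α =>
        G.Adj (Sum.inl (Sum.inl u)) (Sum.inl (Sum.inl u'))) = univ.erase u := by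
      refine eq_of_subset_of_card_le (hAsub u) ?_
      rw [card_erase_of_mem (mem_univ u), card_univ, hAeq u (mem_univ u)]
    have hmem : u' ∈ univ.erase u := mem_erase.mpr ⟨hne.symm, mem_univ _⟩
    rw [← heq, mem_filter] at hmem
    exact hmem.2
  have fact2 : ∀ (u : α) (x : γ), G.Adj (Sum.inl (Sum.inl u)) (Sum.inr x) := by
    intro u x
    have heq : (univ.filter fun x' : γ =>
        G.Adj (Sum.inl (Sum.inl u)) (Sum.inr x')) = univ := by
      refine eq_of_subset_of_card_le (filter_subset _ _) ?_
      rw [card_univ, hCeq u (mem_univ u)]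
    have hmem : x ∈ (univ : Finset γ) := mem_univ x
    rw [← heq, mem_filter] at hmem
    exact hmem.2
  have fact3 : ∀ w w' : β, ¬ G.Adj (Sum.inl (Sum.inr w)) (Sum.inl (Sum.inr w')) := by
    intro w w' hadj
    have h0 := hdec (Sum.inl (Sum.inr w))
    rw [hdW] at h0
    have hW := hWeq w (mem_univ w)
    have hB0 : (univ.filter fun w'' : β =>
        G.Adj (Sum.inl (Sum.inr w)) (Sum.inl (Sum.inr w''))).card = 0 := by omega
    rw [Finset.card_eq_zero] at hB0
    have : w' ∈ (univ.filter fun w'' : β =>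
        G.Adj (Sum.inl (Sum.inr w)) (Sum.inl (Sum.inr w''))) :=
      mem_filter.mpr ⟨mem_univ _, hadj⟩
    rw [hB0] at this
    exact notMem_empty _ this
  have fact4 : ∀ (w : β) (x : γ), ¬ G.Adj (Sum.inl (Sum.inr w)) (Sum.inr x) := by
    intro w x hadj
    have h0 := hdec (Sum.inl (Sum.inr w))
    rw [hdW] at h0
    have hW := hWeq w (mem_univ w)
    have hC0 : (univ.filter fun x' : γ =>
        G.Adj (Sum.inl (Sum.inr w)) (Sum.inr x')).card = 0 := by omega
    rw [Finset.card_eq_zero] at hC0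
    have : x ∈ (univ.filter fun x' : γ =>
        G.Adj (Sum.inl (Sum.inr w)) (Sum.inr x')) :=
      mem_filter.mpr ⟨mem_univ _, hadj⟩
    rw [hC0] at this
    exact notMem_empty _ this
  ext v v'
  rcases v with (u|w)|x <;> rcases v' with (u'|w')|y
  · simp only [comp_adj_UU]
    constructor
    · intro h heq
      cases heq
      exact G.loopless.irrefl _ h
    · exact fact1 u u'
  · simp only [comp_adj_UW, mem_EOf]
  · simp only [comp_adj_UB, iff_true]
    exact fact2 u y
  · rw [SimpleGraph.adj_comm]
    simp only [comp_adj_WU, mem_EOf]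
  · simp only [comp_adj_WW, iff_false]
    exact fact3 w w'
  · simp only [comp_adj_WB, iff_false]
    exact fact4 w y
  · rw [SimpleGraph.adj_comm]
    simp only [comp_adj_BU, iff_true]
    exact fact2 u' x
  · rw [SimpleGraph.adj_comm]
    simp only [comp_adj_BW, iff_false]
    exact fact4 w' x
  · simp only [comp_adj_BB, SimpleGraph.comap_adj]

end AUX4

set_option maxHeartbeats 4000000

/-- Let `𝔖` be a bipartite graph on finite parts `(α, β)` (primary class `α`) and `𝒢`
a simple graph on a finite vertex set `γ`, and let `d` be the degree function on
`(α ⊕ β) ⊕ γ` of the composition of the split graph obtained from `𝔖` by filling `α`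
with all edges, with the graph `𝒢`:  `d(u) = deg_𝔖(u) + (|α| - 1) + |γ|` for `u ∈ α`,
`d(w) = deg_𝔖(w)` for `w ∈ β`, `d(x) = deg_𝒢(x) + |α|` for `x ∈ γ`.  Then `𝔾(d)` is
isomorphic to `𝔾_bip(deg_𝔖|α, deg_𝔖|β) □ 𝔾(deg_𝒢)`. -/
theorem realizationGraph_splitted_comp_iso_boxProd
    {α β γ : Type*} [Fintype α] [Fintype β] [Fintype γ]
    [DecidableEq α] [DecidableEq β]
    (𝔖 : Finset (α × β)) (𝒢 : SimpleGraph γ)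
    (d : (α ⊕ β) ⊕ γ → ℕ)
    (hdU : ∀ u : α, d (Sum.inl (Sum.inl u)) =
      bipDegU 𝔖 u + (Fintype.card α - 1) + Fintype.card γ)
    (hdW : ∀ w : β, d (Sum.inl (Sum.inr w)) = bipDegW 𝔖 w)
    (hdB : ∀ x : γ, d (Sum.inr x) = 𝒢.degree x + Fintype.card α) :
    Nonempty
      (realizationGraph d ≃g
        (bipRealizationGraph (fun u => bipDegU 𝔖 u)
            (fun w => bipDegW 𝔖 w)).boxProd
          (realizationGraph (fun v => 𝒢.degree v))) := by
  classical
  have hrepr : ∀ G : SimpleGraph ((α ⊕ β) ⊕ γ), (∀ v, G.degree v = d v) →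
      G = comp (EOf G) (SimpleGraph.comap Sum.inr G) := fun G hG =>
    structure_lemma 𝔖 d hdU hdW G hG
  have hEU : ∀ (G : SimpleGraph ((α ⊕ β) ⊕ γ)) (hG : ∀ v, G.degree v = d v) (u : α),
      bipDegU (EOf G) u = bipDegU 𝔖 u := by
    intro G hG u
    have h0 := hG (Sum.inl (Sum.inl u))
    rw [hrepr G hG] at h0
    rw [comp_degree_U, hdU] at h0
    omega
  have hEW : ∀ (G : SimpleGraph ((α ⊕ β) ⊕ γ)) (hG : ∀ v, G.degree v = d v) (w : β),
      bipDegW (EOf G) w = bipDegW 𝔖 w := by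
    intro G hG w
    have h0 := hG (Sum.inl (Sum.inr w))
    rw [hrepr G hG] at h0
    rw [comp_degree_W, hdW] at h0
    omega
  have hHdeg : ∀ (G : SimpleGraph ((α ⊕ β) ⊕ γ)) (hG : ∀ v, G.degree v = d v) (x : γ),
      (SimpleGraph.comap Sum.inr G).degree x = 𝒢.degree x := by
    intro G hG x
    have h0 := hG (Sum.inr x)
    rw [hrepr G hG] at h0
    rw [comp_degree_B, hdB] at h0
    convert Nat.add_right_cancel h0
  have hcompdeg : ∀ (E : Finset (α × β)) (H : SimpleGraph γ),
      (∀ u, bipDegU E u = bipDegU 𝔖 u) → (∀ w, bipDegW E w = bipDegW 𝔖 w) →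
      (∀ x, H.degree x = 𝒢.degree x) → ∀ v, (comp E H).degree v = d v := by
    intro E H h1 h2 h3 v
    rcases v with (u|w)|x
    · rw [comp_degree_U, hdU, h1]
    · rw [comp_degree_W, hdW, h2]
    · rw [comp_degree_B, hdB, h3]
  refine ⟨RelIso.mk (Equiv.mk
    (fun G => (⟨EOf G.1, fun u => hEU G.1 G.2 u, fun w => hEW G.1 G.2 w⟩,
        ⟨SimpleGraph.comap Sum.inr G.1, fun x => hHdeg G.1 G.2 x⟩))
    (fun p => ⟨comp p.1.1 p.2.1, hcompdeg p.1.1 p.2.1 p.1.2.1 p.1.2.2 p.2.2⟩)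
    ?_ ?_) ?_⟩
  · intro G
    exact Subtype.ext (hrepr G.1 G.2).symm
  · rintro ⟨⟨E, hE⟩, ⟨H, hH⟩⟩
    exact Prod.ext (Subtype.ext (EOf_comp E H)) (Subtype.ext (comap_comp E H))
  · intro G G'
    have e1 : G.1 = comp (EOf G.1) (SimpleGraph.comap Sum.inr G.1) := hrepr G.1 G.2
    have e2 : G'.1 = comp (EOf G'.1) (SimpleGraph.comap Sum.inr G'.1) := hrepr G'.1 G'.2
    have key : IsSwap G.1 G'.1 ↔
        (IsBipSwap (EOf G.1) (EOf G'.1) ∧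
          SimpleGraph.comap Sum.inr G'.1 = SimpleGraph.comap Sum.inr G.1)
        ∨ (EOf G'.1 = EOf G.1 ∧
          IsSwap (SimpleGraph.comap Sum.inr G.1) (SimpleGraph.comap Sum.inr G'.1)) := by
      constructor
      · intro hs
        rw [e1, e2] at hs
        exact isSwap_comp_forward hs
      · rintro (⟨hb, hh⟩ | ⟨he, hs⟩)
        · rw [e1, e2, ← hh]
          exact isSwap_comp_of_bip _ hb
        · rw [e1, e2, he]
          exact isSwap_comp_of_swap _ hs
    have keyne : G = G' ↔ (EOf G.1 = EOf G'.1 ∧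
        SimpleGraph.comap Sum.inr G.1 = SimpleGraph.comap Sum.inr G'.1) := by
      constructor
      · rintro rfl; exact ⟨rfl, rfl⟩
      · rintro ⟨ha, hb⟩
        refine Subtype.ext ?_
        rw [e1, e2, ha, hb]
    have sb : IsBipSwap (EOf G'.1) (EOf G.1) ↔ IsBipSwap (EOf G.1) (EOf G'.1) :=
      ⟨isBipSwap_symm, isBipSwap_symm⟩
    have ss : IsSwap (SimpleGraph.comap Sum.inr G'.1) (SimpleGraph.comap Sum.inr G.1) ↔
        IsSwap (SimpleGraph.comap Sum.inr G.1) (SimpleGraph.comap Sum.inr G'.1) :=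
      ⟨isSwap_symm, isSwap_symm⟩
    have ss2 : IsSwap G'.1 G.1 ↔ IsSwap G.1 G'.1 := ⟨isSwap_symm, isSwap_symm⟩
    have nb : IsBipSwap (EOf G.1) (EOf G'.1) → EOf G.1 ≠ EOf G'.1 := isBipSwap_ne
    have ns : IsSwap (SimpleGraph.comap Sum.inr G.1) (SimpleGraph.comap Sum.inr G'.1) →
        SimpleGraph.comap Sum.inr G.1 ≠ SimpleGraph.comap Sum.inr G'.1 := isSwap_ne
    have c1 : (EOf G'.1 = EOf G.1) ↔ (EOf G.1 = EOf G'.1) := eq_comm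
    have c2 : (SimpleGraph.comap Sum.inr G'.1 = SimpleGraph.comap Sum.inr G.1) ↔
        (SimpleGraph.comap Sum.inr G.1 = SimpleGraph.comap Sum.inr G'.1) := eq_comm
    simp only [Equiv.coe_fn_mk, SimpleGraph.boxProd_adj, bipRealizationGraph,
      realizationGraph, SimpleGraph.fromRel_adj, ne_eq, Subtype.mk.injEq]
    rw [keyne, key]
    simp only [Subtype.ext_iff]
    tauto
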